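/- arXiv:2311.06604 — 4 statements merged into one kernel-verified Lean document; each statement's English description precedes it below -/
import Mathlib

section
/- Let V : ℤ → ℝ be discretely convex and let X be a finitely supported random variable on ℤ≥0. Define G(n, u) = R(n, u) + E[V(n − u + X)] where R is jointly discretely convex. Then for each fixed n ≥ 0, the maximum of G(n, ·) over {0, 1, …, n} is attained at u = 0 or u = n. -/
private lemma diff_mono (f : ℤ → ℝ) (hf : ∀ u : ℤ, 2 * f u ≤ f (u + 1) + f (u - 1)) :
    ∀ a b : ℤ, a ≤ b → f (a + 1) - f a ≤ f (b + 1) - f b := by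
  intro a
  refine Int.le_induction ?_ ?_
  · exact le_rfl
  · intro b _ ih
    refine ih.trans ?_
    have h := hf (b + 1)
    have h2 : b + 1 - 1 = b := by ring
    rw [h2] at h
    linarith

private lemma upper_bd (f : ℤ → ℝ) (hf : ∀ u : ℤ, 2 * f u ≤ f (u + 1) + f (u - 1)) :
    ∀ a b : ℤ, a ≤ b → f b - f a ≤ ((b - a : ℤ) : ℝ) * (f (b + 1) - f b) := by
  intro a
  refine Int.le_induction ?_ ?_
  · simp
  · intro b hb ih
    have hD := diff_mono f hf b (b + 1) (by linarith)
    have hba : (0 : ℝ) ≤ (b : ℝ) - (a : ℝ) := by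
      have : ((a : ℤ) : ℝ) ≤ ((b : ℤ) : ℝ) := by exact_mod_cast hb
      linarith
    push_cast at ih ⊢
    linarith [mul_le_mul_of_nonneg_left hD hba]

private lemma lower_bd (f : ℤ → ℝ) (hf : ∀ u : ℤ, 2 * f u ≤ f (u + 1) + f (u - 1)) :
    ∀ a b : ℤ, a ≤ b → ((b - a : ℤ) : ℝ) * (f (a + 1) - f a) ≤ f b - f a := by
  intro a
  refine Int.le_induction ?_ ?_
  · simp
  · intro b hb ih
    have hD := diff_mono f hf a b hb
    push_cast at ih ⊢
    linarith

private lemma max_endpoints (f : ℤ → ℝ) (hf : ∀ u : ℤ, 2 * f u ≤ f (u + 1) + f (u - 1))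
    (n u : ℤ) (h0 : 0 ≤ u) (hn : u ≤ n) : f u ≤ max (f 0) (f n) := by
  rcases eq_or_lt_of_le h0 with h | h
  · rw [← h]; exact le_max_left _ _
  rcases eq_or_lt_of_le hn with h' | h'
  · rw [h']; exact le_max_right _ _
  by_cases hle : f u ≤ f 0
  · exact hle.trans (le_max_left _ _)
  push_neg at hle
  have hB := upper_bd f hf 0 u h0
  have hC := lower_bd f hf u n hn
  have hu : (0 : ℝ) < (u : ℝ) := by exact_mod_cast h
  have hnu : (0 : ℝ) < ((n - u : ℤ) : ℝ) := by exact_mod_cast sub_pos.2 h'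
  have hD : 0 < f (u + 1) - f u := by
    by_contra hDn
    push_neg at hDn
    have : ((u - 0 : ℤ) : ℝ) * (f (u + 1) - f u) ≤ 0 :=
      mul_nonpos_of_nonneg_of_nonpos (by push_cast; linarith) hDn
    linarith
  have : 0 < ((n - u : ℤ) : ℝ) * (f (u + 1) - f u) := mul_pos hnu hD
  have : f u ≤ f n := by linarith
  exact this.trans (le_max_right _ _)

theorem bang_bang_optimal (V : ℤ → ℝ) (R : ℤ → ℤ → ℝ)
    (hV : ∀ n : ℤ, 2 * V n ≤ V (n + 1) + V (n - 1))
    (hR : ∀ p d : ℤ × ℤ, 2 * R p.1 p.2 ≤ R (p.1 + d.1) (p.2 + d.2) + R (p.1 - d.1) (p.2 - d.2))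
    (s : Finset ℕ) (w : ℕ → ℝ) (hw : ∀ x, 0 ≤ w x) (hw1 : ∑ x ∈ s, w x = 1)
    (G : ℤ → ℤ → ℝ)
    (hG : ∀ n u : ℤ, G n u = R n u + ∑ x ∈ s, w x * V (n - u + (x : ℤ))) :
    ∀ n : ℤ, 0 ≤ n → ∀ u : ℤ, 0 ≤ u → u ≤ n → G n u ≤ max (G n 0) (G n n) := by
  intro n hn u hu hun
  have hconv : ∀ v : ℤ, 2 * G n v ≤ G n (v + 1) + G n (v - 1) := by
    intro v
    rw [hG n v, hG n (v + 1), hG n (v - 1)]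
    have hRpart := hR (n, v) (0, 1)
    simp only [add_zero, sub_zero] at hRpart
    have hsum : ∀ x ∈ s, 2 * (w x * V (n - v + (x : ℤ))) ≤
        w x * V (n - (v + 1) + (x : ℤ)) + w x * V (n - (v - 1) + (x : ℤ)) := by
      intro x _
      have h := mul_le_mul_of_nonneg_left (hV (n - v + (x : ℤ))) (hw x)
      have e1 : n - (v + 1) + (x : ℤ) = (n - v + (x : ℤ)) - 1 := by ring
      have e2 : n - (v - 1) + (x : ℤ) = (n - v + (x : ℤ)) + 1 := by ring
      rw [e1, e2]
      linarith [h]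
    have hS : 2 * ∑ x ∈ s, w x * V (n - v + (x : ℤ)) ≤
        (∑ x ∈ s, w x * V (n - (v + 1) + (x : ℤ))) +
        (∑ x ∈ s, w x * V (n - (v - 1) + (x : ℤ))) := by
      rw [Finset.mul_sum, ← Finset.sum_add_distrib]
      exact Finset.sum_le_sum hsum
    linarith
  exact max_endpoints (G n) hconv n u hu hun
end

section
/- Define the finite-horizon value function by backward recursion: V_T(n) = R(n, n) and V_t(n) = max over u ∈ {0,…,n} of [R(n, u) + E[V_{t+1}(n − u + X_{t+1})]], where R(n,u) = max(0, b(u−1)) − c(n−u) with b, c > 0 and each X_t is finitely supported on ℤ≥0. Then for every t ≤ T, V_t is discretely convex in n. -/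
/-- Single-stage platooning reward: release `u` of `n` trucks. -/
def stageReward (b c : ℝ) (n u : ℕ) : ℝ :=
  max 0 (b * ((u : ℝ) - 1)) - c * ((n : ℝ) - (u : ℝ))

/-- Finite-horizon value function, indexed by time-to-go `k` (so `k = 0` is the
terminal time `T`) and state `n` (number of trucks at the hub). The arrivals at
each stage are finitely supported on `s k` with probability weights `w k`. -/
def hubValue (b c : ℝ) (s : ℕ → Finset ℕ) (w : ℕ → ℕ → ℝ) : ℕ → ℕ → ℝ
  | 0, n => stageReward b c n n
  | k + 1, n =>
      (Finset.range (n + 1)).sup' (Finset.nonempty_range_iff.mpr (Nat.succ_ne_zero n))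
        (fun u => stageReward b c n u + ∑ x ∈ s k, w k x * hubValue b c s w k (n - u + x))

lemma stage_diag_convex (b c : ℝ) (n : ℕ) :
    2 * stageReward b c (n+1) (n+1) ≤ stageReward b c (n+2) (n+2) + stageReward b c n n := by
  simp only [stageReward]
  push_cast
  rcases max_choice 0 (b * ((n:ℝ) + 1 - 1)) with h | h <;> rw [h] <;>
    nlinarith [le_max_left 0 (b * ((n:ℝ) + 2 - 1)), le_max_right 0 (b * ((n:ℝ) + 2 - 1)),
      le_max_left 0 (b * ((n:ℝ) - 1)), le_max_right 0 (b * ((n:ℝ) - 1))]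

theorem value_function_discretely_convex (b c : ℝ) (hb : 0 < b) (hc : 0 < c)
    (s : ℕ → Finset ℕ) (w : ℕ → ℕ → ℝ)
    (hw : ∀ k x, 0 ≤ w k x) (hw1 : ∀ k, ∑ x ∈ s k, w k x = 1) :
    ∀ k n : ℕ, 2 * hubValue b c s w k (n + 1)
      ≤ hubValue b c s w k (n + 2) + hubValue b c s w k n := by
  intro k
  induction k with
  | zero =>
    intro n
    simpa only [hubValue] using stage_diag_convex b c n
  | succ k ih =>
    intro n
    have hne : ∀ m : ℕ, (Finset.range (m+1)).Nonempty :=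
      fun m => Finset.nonempty_range_iff.mpr (Nat.succ_ne_zero m)
    set F : ℕ → ℕ → ℝ := fun m u =>
      stageReward b c m u + ∑ x ∈ s k, w k x * hubValue b c s w k (m - u + x) with hF
    have hval : ∀ m, hubValue b c s w (k+1) m = (Finset.range (m+1)).sup' (hne m) (F m) :=
      fun m => rfl
    have hle : ∀ m u, u ∈ Finset.range (m+1) → F m u ≤ hubValue b c s w (k+1) m := by
      intro m u hu
      rw [hval m]
      exact Finset.le_sup' (F m) hu
    obtain ⟨u, hu, hueq⟩ := Finset.exists_mem_eq_sup' (hne (n+1)) (F (n+1))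
    rw [hval (n+1), hueq]
    have hu' : u ≤ n + 1 := Nat.lt_succ_iff.mp (Finset.mem_range.mp hu)
    have hFeq : ∀ m v, F m v =
        stageReward b c m v + ∑ x ∈ s k, w k x * hubValue b c s w k (m - v + x) :=
      fun m v => rfl
    rcases Nat.lt_or_ge u (n+1) with hcase | hcase
    · -- interior case: u ≤ n
      have hun : u ≤ n := Nat.lt_succ_iff.mp hcase
      have hstage : 2 * stageReward b c (n+1) u = stageReward b c (n+2) u + stageReward b c n u := by
        simp only [stageReward]; push_cast; ring
      have hS : 2 * (∑ x ∈ s k, w k x * hubValue b c s w k (n + 1 - u + x))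
          ≤ (∑ x ∈ s k, w k x * hubValue b c s w k (n + 2 - u + x))
            + ∑ x ∈ s k, w k x * hubValue b c s w k (n - u + x) := by
        rw [Finset.mul_sum, ← Finset.sum_add_distrib]
        refine Finset.sum_le_sum fun x _ => ?_
        have e1 : n + 1 - u + x = (n - u + x) + 1 := by omega
        have e2 : n + 2 - u + x = (n - u + x) + 2 := by omega
        rw [e1, e2]
        nlinarith [hw k x, ih (n - u + x)]
      have h1 := hle (n+2) u (Finset.mem_range.mpr (by omega))
      have h2 := hle n u (Finset.mem_range.mpr (by omega))
      rw [hFeq (n+2) u] at h1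
      rw [hFeq n u] at h2
      rw [hFeq (n+1) u]
      linarith
    · -- boundary case: u = n + 1
      have hud : u = n + 1 := le_antisymm hu' hcase
      subst hud
      have hFdiag : ∀ m : ℕ, F m m =
          stageReward b c m m + ∑ x ∈ s k, w k x * hubValue b c s w k x := by
        intro m
        simp [hF, Nat.sub_self]
      have h1 := hle (n+2) (n+2) (Finset.mem_range.mpr (by omega))
      have h2 := hle n n (Finset.mem_range.mpr (by omega))
      rw [hFdiag (n+2)] at h1
      rw [hFdiag n] at h2
      rw [hFdiag (n+1)]
      linarith [stage_diag_convex b c n]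
end

section
/- With the setup of the single-hub dynamic program (R(n,u) = max(0, b(u−1)) − c(n−u), b, c > 0, V_T(n) = R(n,n), backward Bellman recursion), suppose V_{t+1} is discretely convex and satisfies V_{t+1}(n+1) − V_{t+1}(n) ≤ b for all n ≥ 0. Define Δ_t(n) = G_t(n, n) − G_t(n, 0) where G_t(n,u) = R(n,u) + E[V_{t+1}(n − u + X_{t+1})]. Then Δ_t(n+1) − Δ_t(n) ≥ c > 0 for all n ≥ 1, so Δ_t is strictly increasing on n ≥ 1. -/
theorem advantage_strictly_increasing (b c : ℝ) (hb : 0 < b) (hc : 0 < c)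
    (V1 : ℕ → ℝ)
    (hconv : ∀ n : ℕ, 2 * V1 (n + 1) ≤ V1 (n + 2) + V1 n)
    (hdiff : ∀ n : ℕ, V1 (n + 1) - V1 n ≤ b)
    (s : Finset ℕ) (w : ℕ → ℝ) (hw : ∀ x, 0 ≤ w x) (hw1 : ∑ x ∈ s, w x = 1)
    (G : ℕ → ℕ → ℝ)
    (hG : ∀ n u : ℕ, G n u =
      (max 0 (b * ((u : ℝ) - 1)) - c * ((n : ℝ) - (u : ℝ))) +
        ∑ x ∈ s, w x * V1 (n - u + x))
    (Δ : ℕ → ℝ) (hΔ : ∀ n, Δ n = G n n - G n 0) :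
    ∀ n : ℕ, 1 ≤ n → c ≤ Δ (n + 1) - Δ n := by
  intro n hn
  have hmax1 : max 0 (b * ((n : ℝ) - 1)) = b * ((n : ℝ) - 1) := by
    have : (1 : ℝ) ≤ (n : ℝ) := by exact_mod_cast hn
    have : 0 ≤ b * ((n : ℝ) - 1) := mul_nonneg hb.le (by linarith)
    exact max_eq_right this
  have hmax2 : max 0 (b * (((n + 1 : ℕ) : ℝ) - 1)) = b * (((n + 1 : ℕ) : ℝ) - 1) := by
    have : (0 : ℝ) ≤ (n : ℝ) := Nat.cast_nonneg n
    push_cast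
    exact max_eq_right (mul_nonneg hb.le (by linarith))
  have hmax0 : max 0 (b * (((0 : ℕ) : ℝ) - 1)) = 0 := by
    apply max_eq_left
    push_cast
    nlinarith
  have key : ∑ x ∈ s, w x * V1 (1 + n + x) - ∑ x ∈ s, w x * V1 (n + x) ≤ b := by
    rw [← Finset.sum_sub_distrib]
    calc ∑ x ∈ s, (w x * V1 (1 + n + x) - w x * V1 (n + x))
        ≤ ∑ x ∈ s, w x * b := by
          apply Finset.sum_le_sum
          intro x _
          rw [← mul_sub]
          have h1 : V1 (1 + n + x) - V1 (n + x) ≤ b := by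
            have := hdiff (n + x)
            have e : n + x + 1 = 1 + n + x := by ring
            rwa [e] at this
          exact mul_le_mul_of_nonneg_left h1 (hw x)
      _ = b := by rw [← Finset.sum_mul, hw1, one_mul]
  have e1 : Δ (n + 1) - Δ n =
      (G (n+1) (n+1) - G (n+1) 0) - (G n n - G n 0) := by rw [hΔ, hΔ]
  rw [e1, hG, hG, hG, hG]
  simp only [Nat.sub_self, Nat.sub_zero, hmax1, hmax2, hmax0]
  push_cast
  simp only [zero_add]
  have hA : ∀ m : ℕ, ∑ x ∈ s, w x * V1 (m + x) = ∑ x ∈ s, w x * V1 (m + x) := fun _ => rfl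
  ring_nf
  nlinarith [key]
end

section
/- Suppose Δ : ℤ≥1 → ℝ is strictly increasing and define the policy μ(n) = n if Δ(n) ≥ 0, μ(n) = 0 otherwise (and μ(0) = 0). Then μ is a threshold policy: there exists τ ∈ ℤ≥1 ∪ {∞} such that μ(n) = n ⟺ n ≥ τ for all n ≥ 1, and the value of the DP at state n equals max(G(n,0), G(n,n)) where Δ(n) = G(n,n) − G(n,0) and the maximizer over u ∈ {0,…,n} is in {0,n}. -/
theorem threshold_policy_characterization (G : ℤ → ℤ → ℝ)
    (hG : ∀ p d : ℤ × ℤ,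
      2 * G p.1 p.2 ≤ G (p.1 + d.1) (p.2 + d.2) + G (p.1 - d.1) (p.2 - d.2))
    (Δ : ℤ → ℝ) (hΔdef : ∀ n : ℤ, Δ n = G n n - G n 0)
    (hinc : ∀ n : ℤ, 1 ≤ n → Δ n < Δ (n + 1))
    (μ : ℤ → ℤ) (hμ0 : μ 0 = 0)
    (hμ : ∀ n : ℤ, 1 ≤ n → μ n = if 0 ≤ Δ n then n else 0) :
    (∃ τ : ℕ∞, ∀ n : ℕ, 1 ≤ n → (μ (n : ℤ) = (n : ℤ) ↔ τ ≤ (n : ℕ∞))) ∧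
    (∀ n : ℤ, 0 ≤ n → ∀ u : ℤ, 0 ≤ u → u ≤ n → G n u ≤ max (G n 0) (G n n)) := by
  constructor
  · -- threshold part
    have hmono : ∀ m : ℤ, 1 ≤ m → ∀ n : ℤ, m ≤ n → Δ m ≤ Δ n := fun m hm =>
      Int.le_induction le_rfl (fun k hk ih => ih.trans (hinc k (hm.trans hk)).le)
    have hiff : ∀ n : ℕ, 1 ≤ n → (μ (n : ℤ) = (n : ℤ) ↔ 0 ≤ Δ (n : ℤ)) := by
      intro n hn
      have hn' : (1 : ℤ) ≤ n := by exact_mod_cast hn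
      rw [hμ n hn']
      by_cases h : 0 ≤ Δ (n : ℤ)
      · simp [h]
      · simp only [if_neg h]
        constructor
        · intro h0; exfalso; omega
        · intro h0; exact absurd h0 h
    set S : Set ℕ := {k : ℕ | 1 ≤ k ∧ 0 ≤ Δ (k : ℤ)} with hS
    by_cases hne : S.Nonempty
    · refine ⟨((sInf S : ℕ) : ℕ∞), ?_⟩
      intro n hn
      have hmem : sInf S ∈ S := Nat.sInf_mem hne
      rw [hiff n hn]
      constructor
      · intro h
        have : n ∈ S := ⟨hn, h⟩
        exact_mod_cast Nat.sInf_le this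
      · intro h
        have h' : sInf S ≤ n := by exact_mod_cast h
        have h'' : (((sInf S : ℕ)) : ℤ) ≤ (n : ℤ) := by exact_mod_cast h'
        exact hmem.2.trans (hmono _ (by exact_mod_cast hmem.1) _ h'')
    · refine ⟨⊤, ?_⟩
      intro n hn
      rw [hiff n hn]
      constructor
      · intro h
        exact absurd ⟨hn, h⟩ (fun hmem => hne ⟨n, hmem⟩)
      · intro h
        exact absurd (top_le_iff.mp h) (by simp)
  · -- convexity part
    intro n hn u hu hun
    set f : ℤ → ℝ := fun i => G n i with hf
    have hconv : ∀ i : ℤ, 2 * f i ≤ f (i + 1) + f (i - 1) := by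
      intro i
      simpa using hG (n, i) (0, 1)
    set h : ℤ → ℝ := fun i => f (i + 1) - f i with hh
    have hstep : ∀ i : ℤ, h i ≤ h (i + 1) := by
      intro i
      have h2 : 2 * f (i + 1) ≤ f (i + 1 + 1) + f i := by
        have := hconv (i + 1)
        simpa using this
      simp only [hh]
      linarith
    have hmono : ∀ i : ℤ, ∀ j : ℤ, i ≤ j → h i ≤ h j := fun i =>
      Int.le_induction le_rfl (fun k _ ih => ih.trans (hstep k))
    have htel : ∀ a b : ℤ, a ≤ b → f b - f a = ∑ i ∈ Finset.Ico a b, h i := fun a =>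
      Int.le_induction (by simp) (fun k hk ih => by
        have hins : Finset.Ico a (k + 1) = insert k (Finset.Ico a k) := by
          ext x; simp only [Finset.mem_Ico, Finset.mem_insert]; omega
        rw [hins, Finset.sum_insert (by simp), ← ih]
        simp only [hh]
        ring)
    rcases eq_or_lt_of_le hu with heq | hu0
    · rw [← heq]; exact le_max_left _ _
    · by_cases hc : h (u - 1) ≤ 0
      · refine le_max_of_le_left ?_
        have ht := htel 0 u hu
        have hsum : ∑ i ∈ Finset.Ico (0 : ℤ) u, h i ≤ 0 := by
          apply Finset.sum_nonpos
          intro i hi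
          simp only [Finset.mem_Ico] at hi
          exact (hmono i (u - 1) (by omega)).trans hc
        have : f u ≤ f 0 := by linarith
        exact this
      · refine le_max_of_le_right ?_
        push_neg at hc
        have ht := htel u n hun
        have hsum : 0 ≤ ∑ i ∈ Finset.Ico u n, h i := by
          apply Finset.sum_nonneg
          intro i hi
          simp only [Finset.mem_Ico] at hi
          exact le_of_lt (lt_of_lt_of_le hc (hmono (u - 1) i (by omega)))
        have : f u ≤ f n := by linarith
        exact this
end
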